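/- Let n = 2m ≥ 2 be an even integer and suppose f^{(2m)} is integrable on [a,b] with γ_{2m} ≤ f^{(2m)}(x) ≤ Γ_{2m} for all x ∈ [a,b]. Then for every θ ∈ [0,1], |I - F_{2m} - (b-a)^{2m+1}/((2m)!·2^{2m}) · (1/(2m+1) - θ) · (f^{(2m-1)}(b) - f^{(2m-1)}(a))/(b-a)| ≤ [(f^{(2m-1)}(b) - f^{(2m-1)}(a))/(b-a) - γ_{2m}] · (b-a)^{2m+1}/((2m)!·2^{2m}) · K, where K = max{θ - 1/(2m+1), θ(2m-1) - 2m/(2m+1)} if θ(2m-1) ≥ 1, and K = max{|θ - 1/(2m+1)|, |θ(2m-1) - 2m/(2m+1)|, |θ - 1/(2m+1) - θ^{2m}(2m-1)^{2m-1}|} if θ(2m-1) < 1. -/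

import Mathlib

open MeasureTheory intervalIntegral

/-- The Peano kernel `G_n` from the paper (first branch on `[a,(a+b)/2]`,
second branch on `((a+b)/2, b]`). -/
noncomputable def G (a b θ : ℝ) (n : ℕ) (x : ℝ) : ℝ :=
  if x ≤ (a + b) / 2 then
    (x - a) ^ (n - 1) / (n.factorial : ℝ) * (x - a - θ * n * (b - a) / 2)
  else
    (x - b) ^ (n - 1) / (n.factorial : ℝ) * (x - b + θ * n * (b - a) / 2)

/-- The quadrature functional `F_n`. -/
noncomputable def quadF (a b θ : ℝ) (n : ℕ) (f : ℝ → ℝ) : ℝ :=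
  (b - a) * ((1 - θ) * f ((a + b) / 2) + θ * (f a + f b) / 2)
    + ∑ i ∈ Finset.Icc 1 ((n - 1) / 2),
        (1 - θ * (2 * (i : ℝ) + 1)) * (b - a) ^ (2 * i + 1)
          / (((2 * i + 1).factorial : ℝ) * 2 ^ (2 * i)) * iteratedDeriv (2 * i) f ((a + b) / 2)

/-- `σ(g) = ∫ g² - (1/(b-a)) (∫ g)²`. -/
noncomputable def qsigma (a b : ℝ) (g : ℝ → ℝ) : ℝ :=
  (∫ x in a..b, (g x) ^ 2) - (1 / (b - a)) * (∫ x in a..b, g x) ^ 2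

/-!
On each half of `[a, b]` the Peano kernel `G` is the polynomial
`K_n(x) = (x - e)^n / n! - μ (x - e)^(n-1) / (n-1)!` based at the nearer endpoint `e`, and these
polynomials form an Appell sequence (`K₀ = 1`, `K_{j+1}' = K_j`). Repeated integration by parts,
the last step against the absolutely continuous `f^{(2m-1)}`, gives `∫ G f^{(2m)} = I - F_{2m}`,
while `∫ G = C (b - a)` where the correction term is `C (f^{(2m-1)}(b) - f^{(2m-1)}(a))`. Hence the
corrected error is `∫ (G - C) (f^{(2m)} - γ)`, at most
`sup |G - C| · (f^{(2m-1)}(b) - f^{(2m-1)}(a) - γ (b - a))`. Rescaled to `[0, 1]`, `G` takes the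
values of `s^(2m) - 2mθ s^(2m-1)`, which decreases up to `s = (2m-1)θ` and increases afterwards;
its extreme values on `[0, 1]` give the two forms of `K`.
-/

open Set

theorem integral_deriv_mul_add_integral_mul_of_primitive {u u' v w : ℝ → ℝ} {s t : ℝ}
    (hu : ∀ x, HasDerivAt u (u' x) x) (hu' : Continuous u')
    (hw : IntervalIntegrable w volume s t)
    (hv : ∀ x ∈ uIcc s t, v x = v s + ∫ y in s..x, w y) :
    (∫ x in s..t, u' x * v x) + ∫ x in s..t, u x * w x = u t * v t - u s * v s := by
  set V : ℝ → ℝ := fun x => v s + ∫ y in s..x, w y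
  have hVac : AbsolutelyContinuousOnInterval V s t :=
    contDiffOn_const.absolutelyContinuousOnInterval.fun_add
      (hw.absolutelyContinuousOnInterval_intervalIntegral left_mem_uIcc)
  have hderiv_u : deriv u = u' := funext fun x => (hu x).deriv
  have huac : AbsolutelyContinuousOnInterval u s t :=
    (contDiff_one_iff_deriv.2 ⟨fun x => (hu x).differentiableAt, hderiv_u ▸ hu'⟩).contDiffOn
      |>.absolutelyContinuousOnInterval
  have hderiv_V : ∀ᵐ x, x ∈ uIoc s t → u x * w x = u x * deriv V x := by
    filter_upwards [hw.ae_hasDerivAt_integral] with x hx hxs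
    rw [((hx (uIoc_subset_uIcc hxs) s left_mem_uIcc).const_add (v s)).deriv]
  have hvV : EqOn v V (uIcc s t) := hv
  rw [integral_congr_ae hderiv_V, huac.integral_mul_deriv_eq_deriv_mul hVac, hderiv_u,
    integral_congr (g := fun x => u' x * V x) fun x hx => by simp only [hvV hx],
    hvV right_mem_uIcc, hvV left_mem_uIcc]
  ring

theorem hasDerivAt_sum_neg_one_pow_mul {E K : ℕ → ℝ → ℝ} {n : ℕ} {x : ℝ}
    (hE : ∀ j < n, HasDerivAt (E j) (E (j + 1) x) x)
    (hK : ∀ j < n, HasDerivAt (K (j + 1)) (K j x) x) :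
    HasDerivAt (fun y => ∑ j ∈ Finset.range n, (-1) ^ j * K (j + 1) y * E j y)
      (K 0 x * E 0 x - (-1) ^ n * K n x * E n x) x := by
  have htel : ∀ n,
      ∑ j ∈ Finset.range n, (-1) ^ j * (K j x * E j x + K (j + 1) x * E (j + 1) x)
        = K 0 x * E 0 x - (-1) ^ n * K n x * E n x := fun n => by
    induction n with
    | zero => simp
    | succ n ih => rw [Finset.sum_range_succ, ih]; ring
  rw [← htel]
  refine (HasDerivAt.fun_sum (u := Finset.range n) fun j hj =>
    ((hK j (Finset.mem_range.1 hj)).fun_mul (hE j (Finset.mem_range.1 hj))).const_mul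
      ((-1 : ℝ) ^ j)).congr_of_eventuallyEq (Filter.Eventually.of_forall fun y => ?_)
  exact Finset.sum_congr rfl fun j _ => mul_assoc _ _ _

theorem continuousOn_of_eq_add_primitive {v w : ℝ → ℝ} {s t : ℝ}
    (hw : IntervalIntegrable w volume s t)
    (hv : ∀ x ∈ uIcc s t, v x = v s + ∫ y in s..x, w y) :
    ContinuousOn v (uIcc s t) :=
  (continuousOn_const.add
    (continuousOn_primitive_interval ((intervalIntegrable_iff' (by simp)).1 hw))).congr hv

theorem eq_add_integral_of_eq_add_integral {v w : ℝ → ℝ} {a b c : ℝ}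
    (hw : IntervalIntegrable w volume a b) (hv : ∀ x ∈ uIcc a b, v x = v a + ∫ y in a..x, w y)
    (hc : c ∈ uIcc a b) (x : ℝ) (hx : x ∈ uIcc a b) :
    v x = v c + ∫ y in c..x, w y := by
  rw [hv x hx, hv c hc, add_assoc, integral_add_adjacent_intervals
    (hw.mono_set (uIcc_subset_uIcc left_mem_uIcc hc)) (hw.mono_set (uIcc_subset_uIcc hc hx))]

theorem integral_add_neg_one_pow_mul_integral_eq_sub {E K : ℕ → ℝ → ℝ} {N : ℕ}
    {s t : ℝ} (hK0 : K 0 = 1) (hK : ∀ j x, HasDerivAt (K (j + 1)) (K j x) x)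
    (hE : ∀ j < N, ∀ x ∈ uIcc s t, HasDerivAt (E j) (E (j + 1) x) x)
    (hint : IntervalIntegrable (E (N + 1)) volume s t)
    (hprim : ∀ x ∈ uIcc s t, E N x = E N s + ∫ y in s..x, E (N + 1) y) :
    (∫ x in s..t, E 0 x) + (-1) ^ N * ∫ x in s..t, K (N + 1) x * E (N + 1) x
      = ∑ j ∈ Finset.range (N + 1), (-1) ^ j * K (j + 1) t * E j t
        - ∑ j ∈ Finset.range (N + 1), (-1) ^ j * K (j + 1) s * E j s := by
  have hKcont : ∀ j, Continuous (K j)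
    | 0 => hK0 ▸ continuous_const
    | j + 1 => continuous_iff_continuousAt.2 fun x => (hK j x).continuousAt
  have hEcont : ∀ j ≤ N, ContinuousOn (E j) (uIcc s t) := fun j hj => by
    rcases hj.lt_or_eq with hj | rfl
    · exact fun x hx => (hE j hj x hx).continuousAt.continuousWithinAt
    · exact continuousOn_of_eq_add_primitive hint hprim
  have hKEN : IntervalIntegrable (fun x => K N x * E N x) volume s t :=
    ((hKcont N).continuousOn.mul (hEcont N le_rfl)).intervalIntegrable
  have hE0 : IntervalIntegrable (E 0) volume s t :=
    (hEcont 0 (Nat.zero_le N)).intervalIntegrable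
  -- The first `N` terms of the sum are `C¹`; the last one needs integration by parts.
  have hsmooth := integral_eq_sub_of_hasDerivAt
    (f' := fun y => E 0 y - (-1) ^ N * (K N y * E N y))
    (fun x hx => (hasDerivAt_sum_neg_one_pow_mul (n := N) (fun j hj => hE j hj x hx)
      (fun j _ => hK j x)).congr_deriv (by simp [hK0, mul_assoc]))
    (hE0.sub (hKEN.const_mul _))
  rw [integral_sub hE0 (hKEN.const_mul _), intervalIntegral.integral_const_mul]
    at hsmooth
  have hlast := integral_deriv_mul_add_integral_mul_of_primitive (hK N) (hKcont N) hint hprim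
  rw [Finset.sum_range_succ, Finset.sum_range_succ]
  linear_combination hsmooth + (-1) ^ N * hlast

section peanoPoly

open Nat

/-- For `n ≥ 1` this is `(x - e) ^ n / n! - μ (x - e) ^ (n - 1) / (n - 1)!`; written this way it
equals `1` at `n = 0` despite the truncated subtraction. -/
noncomputable def peanoPoly (e μ : ℝ) (n : ℕ) (x : ℝ) : ℝ :=
  ((x - e) ^ n - n * μ * (x - e) ^ (n - 1)) / n !

variable {e μ : ℝ}

theorem peanoPoly_zero : peanoPoly e μ 0 = 1 := by
  ext x; simp [peanoPoly]

theorem continuous_peanoPoly (n : ℕ) : Continuous (peanoPoly e μ n) := by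
  unfold peanoPoly; fun_prop

theorem hasDerivAt_peanoPoly (n : ℕ) (x : ℝ) :
    HasDerivAt (peanoPoly e μ (n + 1)) (peanoPoly e μ n x) x := by
  have hlin := (hasDerivAt_id x).sub_const e
  have h := ((hlin.pow (n + 1)).sub ((hlin.pow n).const_mul (((n + 1 : ℕ) : ℝ) * μ))).div_const
    ((n + 1)! : ℝ)
  refine h.congr_deriv ?_
  simp only [peanoPoly, id, Nat.add_sub_cancel, factorial_succ]
  rcases n with _ | n
  · simp
  · push_cast
    field_simp

theorem peanoPoly_self {n : ℕ} (hn : 2 ≤ n) : peanoPoly e μ n e = 0 := by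
  simp [peanoPoly, zero_pow (by omega : n ≠ 0), zero_pow (by omega : n - 1 ≠ 0)]

theorem peanoPoly_one_self : peanoPoly e μ 1 e = -μ := by
  simp [peanoPoly]

theorem peanoPoly_neg_of_sub_eq_neg {e' x y : ℝ} (n : ℕ) (hxy : y - e' = -(x - e)) :
    peanoPoly e' (-μ) n y = (-1) ^ n * peanoPoly e μ n x := by
  rcases n with _ | n
  · simp [peanoPoly]
  · simp only [peanoPoly, hxy, neg_pow (x - e), Nat.add_sub_cancel, pow_succ]
    ring

theorem sum_neg_one_pow_mul_peanoPoly_self {n : ℕ} (hn : 1 ≤ n) (E : ℕ → ℝ) :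
    ∑ j ∈ Finset.range n, (-1) ^ j * peanoPoly e μ (j + 1) e * E j = -μ * E 0 := by
  obtain ⟨n, rfl⟩ := Nat.exists_eq_add_of_le' hn
  rw [Finset.sum_range_succ', Finset.sum_eq_zero fun j _ => by
    rw [peanoPoly_self (by omega), mul_zero, zero_mul]]
  simp [peanoPoly_one_self]

theorem sum_neg_one_pow_mul_peanoPoly_sub_sum {e' x y : ℝ} (hxy : y - e' = -(x - e)) (m : ℕ)
    (E : ℕ → ℝ) :
    ∑ j ∈ Finset.range (2 * m), (-1) ^ j * peanoPoly e μ (j + 1) x * E j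
      - ∑ j ∈ Finset.range (2 * m), (-1) ^ j * peanoPoly e' (-μ) (j + 1) y * E j
      = ∑ i ∈ Finset.range m, 2 * peanoPoly e μ (2 * i + 1) x * E (2 * i) := by
  simp only [peanoPoly_neg_of_sub_eq_neg _ hxy, ← Finset.sum_sub_distrib]
  induction m with
  | zero => simp
  | succ m ih =>
    rw [show 2 * (m + 1) = 2 * m + 1 + 1 by ring, Finset.sum_range_succ, Finset.sum_range_succ,
      ih, Finset.sum_range_succ, pow_succ, pow_succ, pow_succ, pow_mul]
    simp only [neg_one_sq, one_pow]
    ring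

theorem two_mul_peanoPoly_midpoint {a b θ : ℝ} {k : ℕ} (hk : 1 ≤ k) :
    2 * peanoPoly a (θ * (b - a) / 2) k ((a + b) / 2)
      = (1 - θ * k) * (b - a) ^ k / (k ! * 2 ^ (k - 1)) := by
  obtain ⟨k, rfl⟩ := Nat.exists_eq_add_of_le' hk
  rw [peanoPoly, show (a + b) / 2 - a = (b - a) / 2 by ring]
  simp only [Nat.add_sub_cancel, pow_succ, div_pow]
  field_simp

end peanoPoly

section peanoProfile

open Nat

noncomputable def peanoProfile (θ : ℝ) (n : ℕ) (s : ℝ) : ℝ :=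
  s ^ n - n * θ * s ^ (n - 1)

theorem peanoPoly_add_mul (e θ h s : ℝ) (n : ℕ) :
    peanoPoly e (θ * h) n (e + h * s) = h ^ n * peanoProfile θ n s / n ! := by
  rcases n with _ | n
  · simp [peanoPoly, peanoProfile]
  · simp only [peanoPoly, peanoProfile, add_sub_cancel_left, Nat.add_sub_cancel, mul_pow,
      pow_succ]
    ring

variable {θ : ℝ} {n : ℕ}

theorem hasDerivAt_peanoProfile (hn : 2 ≤ n) (s : ℝ) :
    HasDerivAt (peanoProfile θ n) (n * s ^ (n - 2) * (s - (n - 1) * θ)) s := by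
  obtain ⟨k, rfl⟩ := Nat.exists_eq_add_of_le' hn
  refine ((hasDerivAt_pow (k + 2) s).sub ((hasDerivAt_pow (k + 1) s).const_mul
    (((k + 2 : ℕ) : ℝ) * θ))).congr_deriv ?_
  simp only [Nat.add_sub_cancel]
  push_cast
  ring

theorem antitoneOn_peanoProfile (hn : 2 ≤ n) :
    AntitoneOn (peanoProfile θ n) (Set.Icc 0 ((n - 1) * θ)) := by
  refine antitoneOn_of_deriv_nonpos (convex_Icc _ _)
    (fun s _ => (hasDerivAt_peanoProfile hn s).continuousAt.continuousWithinAt)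
    (fun s _ => (hasDerivAt_peanoProfile hn s).differentiableAt.differentiableWithinAt)
    fun s hs => ?_
  rw [interior_Icc] at hs
  rw [(hasDerivAt_peanoProfile hn s).deriv]
  exact mul_nonpos_of_nonneg_of_nonpos (by have := hs.1.le; positivity) (by linarith [hs.2])

theorem monotoneOn_peanoProfile (hn : 2 ≤ n) (hθ : 0 ≤ θ) :
    MonotoneOn (peanoProfile θ n) (Set.Ici ((n - 1) * θ)) := by
  have hstar : 0 ≤ ((n : ℝ) - 1) * θ :=
    mul_nonneg (by linarith [show (2 : ℝ) ≤ n by exact_mod_cast hn]) hθ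
  refine monotoneOn_of_deriv_nonneg (convex_Ici _)
    (fun s _ => (hasDerivAt_peanoProfile hn s).continuousAt.continuousWithinAt)
    (fun s _ => (hasDerivAt_peanoProfile hn s).differentiableAt.differentiableWithinAt)
    fun s hs => ?_
  rw [interior_Ici] at hs
  rw [(hasDerivAt_peanoProfile hn s).deriv]
  have : 0 ≤ s := hstar.trans hs.le
  exact mul_nonneg (by positivity) (by linarith [hs.out])

theorem peanoProfile_one : peanoProfile θ n 1 = 1 - n * θ := by
  simp [peanoProfile]

theorem peanoProfile_le_max (hn : 2 ≤ n) (hθ : 0 ≤ θ) {s : ℝ}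
    (hs : s ∈ Set.Icc (0 : ℝ) 1) :
    peanoProfile θ n s ≤ max 0 (1 - n * θ) := by
  have hzero : peanoProfile θ n 0 = 0 := by
    simp [peanoProfile, zero_pow (by omega : n ≠ 0), zero_pow (by omega : n - 1 ≠ 0)]
  rcases le_total s ((n - 1) * θ) with h | h
  · exact ((antitoneOn_peanoProfile hn ⟨le_rfl, hs.1.trans h⟩ ⟨hs.1, h⟩ hs.1).trans_eq
      hzero).trans (le_max_left _ _)
  · exact ((monotoneOn_peanoProfile hn hθ h (h.trans hs.2) hs.2).trans_eq
      peanoProfile_one).trans (le_max_right _ _)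

theorem neg_le_peanoProfile (hn : 2 ≤ n) (hθ : 0 ≤ θ) {s : ℝ} (hs : 0 ≤ s) :
    -(θ ^ n * (n - 1) ^ (n - 1)) ≤ peanoProfile θ n s := by
  have hmin : peanoProfile θ n ((n - 1) * θ) = -(θ ^ n * (n - 1) ^ (n - 1)) := by
    obtain ⟨k, rfl⟩ := Nat.exists_eq_add_of_le' (by omega : 1 ≤ n)
    simp only [peanoProfile, Nat.add_sub_cancel, mul_pow, pow_succ]
    push_cast
    ring
  rw [← hmin]
  rcases le_total s ((n - 1) * θ) with h | h
  · exact antitoneOn_peanoProfile hn ⟨hs, h⟩ ⟨hs.trans h, le_rfl⟩ h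
  · exact monotoneOn_peanoProfile hn hθ Set.self_mem_Ici h h

theorem one_sub_le_peanoProfile (hn : 2 ≤ n) (h1 : 1 ≤ θ * (n - 1)) {s : ℝ}
    (hs : s ∈ Set.Icc (0 : ℝ) 1) :
    1 - n * θ ≤ peanoProfile θ n s :=
  peanoProfile_one.symm.trans_le <| antitoneOn_peanoProfile hn ⟨hs.1, by linarith [hs.2]⟩
    ⟨zero_le_one.trans (by linarith), by linarith⟩ hs.2

theorem abs_peanoProfile_sub_le_of_one_le (hn : 2 ≤ n) (hθ : 0 ≤ θ) (h1 : 1 ≤ θ * (n - 1))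
    {s : ℝ} (hs : s ∈ Set.Icc (0 : ℝ) 1) :
    |peanoProfile θ n s - (1 / (n + 1) - θ)|
      ≤ max (θ - 1 / (n + 1)) (θ * (n - 1) - n / (n + 1)) := by
  have hupper : peanoProfile θ n s ≤ 0 :=
    (peanoProfile_le_max hn hθ hs).trans (max_le le_rfl (by linarith))
  have hlower := one_sub_le_peanoProfile hn h1 hs
  have hfrac : 1 / ((n : ℝ) + 1) - 1 = -(n / (n + 1)) := by field_simp; ring
  rw [abs_le]
  constructor
  · linarith [le_max_right (θ - 1 / (n + 1)) (θ * (n - 1) - n / (n + 1))]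
  · linarith [le_max_left (θ - 1 / (n + 1)) (θ * (n - 1) - n / (n + 1))]

theorem abs_peanoProfile_sub_le (hn : 2 ≤ n) (hθ : 0 ≤ θ) {s : ℝ}
    (hs : s ∈ Set.Icc (0 : ℝ) 1) :
    |peanoProfile θ n s - (1 / (n + 1) - θ)|
      ≤ max (max |θ - 1 / (n + 1)| |θ * (n - 1) - n / (n + 1)|)
          |θ - 1 / (n + 1) - θ ^ n * (n - 1) ^ (n - 1)| := by
  have hupper := peanoProfile_le_max hn hθ hs
  have hlower := neg_le_peanoProfile hn hθ hs.1
  have hfrac : 1 / ((n : ℝ) + 1) - 1 = -(n / (n + 1)) := by field_simp; ring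
  set K := max (max |θ - 1 / (n + 1)| |θ * (n - 1) - n / (n + 1)|)
    |θ - 1 / (n + 1) - θ ^ n * (n - 1) ^ (n - 1)|
  have hA : θ - 1 / (n + 1) ≤ K := (le_abs_self _).trans (le_max_of_le_left (le_max_left _ _))
  have hB : -(θ * (n - 1) - n / (n + 1)) ≤ K :=
    (neg_le_abs _).trans (le_max_of_le_left (le_max_right _ _))
  have hC : -K ≤ θ - 1 / (n + 1) - θ ^ n * (n - 1) ^ (n - 1) :=
    (neg_le_neg (le_max_right _ _)).trans (neg_abs_le _)
  rw [abs_le]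
  exact ⟨by linarith, sub_le_iff_le_add.2 (hupper.trans (max_le (by linarith) (by linarith)))⟩

end peanoProfile

theorem abs_integral_mul_sub_le {g w : ℝ → ℝ} {a b C M γ : ℝ} (hab : a ≤ b)
    (hg : IntervalIntegrable g volume a b) (hw : IntervalIntegrable w volume a b)
    (hgw : IntervalIntegrable (fun x => g x * w x) volume a b)
    (hgC : ∫ x in a..b, g x = C * (b - a))
    (hM : ∀ x ∈ Set.Icc a b, |g x - C| ≤ M) (hγ : ∀ x ∈ Set.Icc a b, γ ≤ w x) :
    |(∫ x in a..b, g x * w x) - C * ∫ x in a..b, w x|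
      ≤ M * ((∫ x in a..b, w x) - γ * (b - a)) := by
  have hexpand : (fun x => (g x - C) * (w x - γ))
      = fun x => g x * w x - γ * g x - (C * w x - C * γ) := by ext x; ring
  have hprod : IntervalIntegrable (fun x => (g x - C) * (w x - γ)) volume a b := by
    rw [hexpand]
    exact (hgw.sub (hg.const_mul γ)).sub ((hw.const_mul C).sub intervalIntegrable_const)
  have hcentered : ∫ x in a..b, (g x - C) * (w x - γ)
      = (∫ x in a..b, g x * w x) - C * ∫ x in a..b, w x := by
    rw [hexpand, integral_sub (hgw.sub (hg.const_mul γ)) ((hw.const_mul C).sub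
      intervalIntegrable_const), integral_sub hgw (hg.const_mul γ), integral_sub
      (hw.const_mul C) intervalIntegrable_const, intervalIntegral.integral_const_mul,
      intervalIntegral.integral_const_mul, hgC, intervalIntegral.integral_const, smul_eq_mul]
    ring
  rw [← hcentered]
  calc |∫ x in a..b, (g x - C) * (w x - γ)|
      ≤ ∫ x in a..b, |(g x - C) * (w x - γ)| := abs_integral_le_integral_abs hab
    _ ≤ ∫ x in a..b, M * (w x - γ) := by
        refine integral_mono_on hab hprod.abs
          ((hw.sub intervalIntegrable_const).const_mul M) fun x hx => ?_
        rw [abs_mul, abs_of_nonneg (sub_nonneg.2 (hγ x hx))]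
        exact mul_le_mul_of_nonneg_right (hM x hx) (sub_nonneg.2 (hγ x hx))
    _ = M * ((∫ x in a..b, w x) - γ * (b - a)) := by
        rw [intervalIntegral.integral_const_mul, integral_sub hw intervalIntegrable_const,
          intervalIntegral.integral_const, smul_eq_mul, mul_comm γ]

section peanoKernel

variable {a b θ : ℝ} {n : ℕ}

theorem G_eq_peanoPoly_left (hn : 1 ≤ n) {x : ℝ} (hx : x ≤ (a + b) / 2) :
    G a b θ n x = peanoPoly a (θ * (b - a) / 2) n x := by
  obtain ⟨k, rfl⟩ := Nat.exists_eq_add_of_le' hn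
  rw [G, if_pos hx, peanoPoly, Nat.add_sub_cancel, pow_succ]
  ring

theorem G_eq_peanoPoly_right (hn : 1 ≤ n) {x : ℝ} (hx : (a + b) / 2 < x) :
    G a b θ n x = peanoPoly b (-(θ * (b - a) / 2)) n x := by
  obtain ⟨k, rfl⟩ := Nat.exists_eq_add_of_le' hn
  rw [G, if_neg hx.not_ge, peanoPoly, Nat.add_sub_cancel, pow_succ]
  ring

theorem G_mul_eqOn_left (hab : a ≤ b) (hn : 1 ≤ n) (w : ℝ → ℝ) :
    EqOn (fun x => G a b θ n x * w x) (fun x => peanoPoly a (θ * (b - a) / 2) n x * w x)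
      (uIoc a ((a + b) / 2)) := fun x hx => by
  rw [uIoc_of_le (by linarith)] at hx
  simp only [G_eq_peanoPoly_left hn hx.2]

theorem G_mul_eqOn_right (hab : a ≤ b) (hn : 1 ≤ n) (w : ℝ → ℝ) :
    EqOn (fun x => G a b θ n x * w x) (fun x => peanoPoly b (-(θ * (b - a) / 2)) n x * w x)
      (uIoc ((a + b) / 2) b) := fun x hx => by
  rw [uIoc_of_le (by linarith)] at hx
  simp only [G_eq_peanoPoly_right hn hx.1]

theorem intervalIntegrable_G_mul (hab : a ≤ b) (hn : 1 ≤ n) {w : ℝ → ℝ}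
    (hw : IntervalIntegrable w volume a b) :
    IntervalIntegrable (fun x => G a b θ n x * w x) volume a b := by
  have hmid : (a + b) / 2 ∈ uIcc a b := by rw [uIcc_of_le hab]; constructor <;> linarith
  refine IntervalIntegrable.trans (b := (a + b) / 2) ?_ ?_
  · have := (hw.mono_set (uIcc_subset_uIcc_left hmid)).continuousOn_mul
      (continuous_peanoPoly (e := a) (μ := θ * (b - a) / 2) n).continuousOn
    exact this.congr (G_mul_eqOn_left hab hn w).symm
  · have := (hw.mono_set (uIcc_subset_uIcc_right hmid)).continuousOn_mul
      (continuous_peanoPoly (e := b) (μ := -(θ * (b - a) / 2)) n).continuousOn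
    exact this.congr (G_mul_eqOn_right hab hn w).symm

theorem integral_G_mul (hab : a ≤ b) (hn : 1 ≤ n) {w : ℝ → ℝ}
    (hw : IntervalIntegrable w volume a b) :
    ∫ x in a..b, G a b θ n x * w x
      = (∫ x in a..(a + b) / 2, peanoPoly a (θ * (b - a) / 2) n x * w x)
        + ∫ x in (a + b) / 2..b, peanoPoly b (-(θ * (b - a) / 2)) n x * w x := by
  have hmid : (a + b) / 2 ∈ uIcc a b := by rw [uIcc_of_le hab]; constructor <;> linarith
  have hGw := intervalIntegrable_G_mul (θ := θ) hab hn hw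
  rw [← integral_add_adjacent_intervals (hGw.mono_set (uIcc_subset_uIcc_left hmid))
    (hGw.mono_set (uIcc_subset_uIcc_right hmid)),
    integral_congr_ae (Filter.Eventually.of_forall (G_mul_eqOn_left hab hn w)),
    integral_congr_ae (Filter.Eventually.of_forall (G_mul_eqOn_right hab hn w))]

end peanoKernel

theorem quadF_eq_sum_peanoPoly (a b θ : ℝ) {m : ℕ} (hm : 1 ≤ m) (f : ℝ → ℝ) :
    quadF a b θ (2 * m) f
      = θ * (b - a) / 2 * (f a + f b) + ∑ i ∈ Finset.range m,
          2 * peanoPoly a (θ * (b - a) / 2) (2 * i + 1) ((a + b) / 2)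
            * iteratedDeriv (2 * i) f ((a + b) / 2) := by
  have hIcc : Finset.Icc 1 ((2 * m - 1) / 2) = Finset.Ico 1 m := by
    ext i; simp only [Finset.mem_Icc, Finset.mem_Ico]; omega
  obtain ⟨k, rfl⟩ := Nat.exists_eq_add_of_le' hm
  rw [quadF, hIcc, Finset.sum_Ico_eq_sum_range, Finset.sum_range_succ',
    two_mul_peanoPoly_midpoint le_rfl]
  simp only [two_mul_peanoPoly_midpoint (Nat.le_add_left 1 _), Nat.add_sub_cancel, add_comm 1]
  push_cast
  simp only [mul_one, pow_one, Nat.factorial_one, Nat.cast_one, pow_zero, div_one,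
    iteratedDeriv_zero]
  ring

theorem integral_sub_integral_peanoPoly_mul_iteratedDeriv {f : ℝ → ℝ} {m : ℕ}
    {e μ s t : ℝ} (hm : 1 ≤ m)
    (hd : ∀ k < 2 * m - 1, ∀ x ∈ uIcc s t,
      HasDerivAt (iteratedDeriv k f) (iteratedDeriv (k + 1) f x) x)
    (hint : IntervalIntegrable (iteratedDeriv (2 * m) f) volume s t)
    (hprim : ∀ x ∈ uIcc s t,
      iteratedDeriv (2 * m - 1) f x
        = iteratedDeriv (2 * m - 1) f s + ∫ y in s..x, iteratedDeriv (2 * m) f y) :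
    (∫ x in s..t, f x) - ∫ x in s..t, peanoPoly e μ (2 * m) x * iteratedDeriv (2 * m) f x
      = ∑ j ∈ Finset.range (2 * m), (-1) ^ j * peanoPoly e μ (j + 1) t * iteratedDeriv j f t
        - ∑ j ∈ Finset.range (2 * m),
            (-1) ^ j * peanoPoly e μ (j + 1) s * iteratedDeriv j f s := by
  have hN : 2 * m - 1 + 1 = 2 * m := by omega
  have h := integral_add_neg_one_pow_mul_integral_eq_sub (E := fun k => iteratedDeriv k f)
    (K := peanoPoly e μ) (N := 2 * m - 1) peanoPoly_zero hasDerivAt_peanoPoly hd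
    (by rwa [hN]) (by rwa [hN])
  simp only [hN, iteratedDeriv_zero, Odd.neg_one_pow (⟨m - 1, by omega⟩ : Odd (2 * m - 1))] at h
  linear_combination h

theorem integral_G_mul_iteratedDeriv {a b θ : ℝ} {m : ℕ} {f : ℝ → ℝ} (hab : a ≤ b)
    (hm : 1 ≤ m)
    (hd : ∀ k < 2 * m - 1, ∀ x ∈ Icc a b,
      HasDerivAt (iteratedDeriv k f) (iteratedDeriv (k + 1) f x) x)
    (hint : IntervalIntegrable (iteratedDeriv (2 * m) f) volume a b)
    (hftc : ∀ x ∈ Icc a b,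
      iteratedDeriv (2 * m - 1) f x
        = iteratedDeriv (2 * m - 1) f a + ∫ t in a..x, iteratedDeriv (2 * m) f t) :
    ∫ x in a..b, G a b θ (2 * m) x * iteratedDeriv (2 * m) f x
      = (∫ x in a..b, f x) - quadF a b θ (2 * m) f := by
  rw [← uIcc_of_le hab] at hd hftc
  set c := (a + b) / 2 with hc
  set μ := θ * (b - a) / 2 with hμ
  have hmem : c ∈ uIcc a b := by rw [uIcc_of_le hab]; constructor <;> linarith
  have hleft := integral_sub_integral_peanoPoly_mul_iteratedDeriv (e := a) (μ := μ) hm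
    (fun k hk x hx => hd k hk x (uIcc_subset_uIcc_left hmem hx))
    (hint.mono_set (uIcc_subset_uIcc_left hmem))
    (fun x hx => hftc x (uIcc_subset_uIcc_left hmem hx))
  have hright := integral_sub_integral_peanoPoly_mul_iteratedDeriv (e := b) (μ := -μ) hm
    (fun k hk x hx => hd k hk x (uIcc_subset_uIcc_right hmem hx))
    (hint.mono_set (uIcc_subset_uIcc_right hmem))
    (fun x hx => eq_add_integral_of_eq_add_integral hint hftc hmem x
      (uIcc_subset_uIcc_right hmem hx))
  rw [sum_neg_one_pow_mul_peanoPoly_self (by omega) (fun j => iteratedDeriv j f a)] at hleft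
  rw [sum_neg_one_pow_mul_peanoPoly_self (by omega) (fun j => iteratedDeriv j f b)] at hright
  have hmid := sum_neg_one_pow_mul_peanoPoly_sub_sum (μ := μ) (show c - b = -(c - a) by ring) m
    (fun j => iteratedDeriv j f c)
  have hf : ContinuousOn f (uIcc a b) := fun x hx =>
    (iteratedDeriv_zero (f := f) ▸ hd 0 (by omega) x hx).continuousAt.continuousWithinAt
  rw [integral_G_mul hab (by omega) hint, quadF_eq_sum_peanoPoly a b θ hm f,
    ← integral_add_adjacent_intervals (hf.mono (uIcc_subset_uIcc_left hmem)).intervalIntegrable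
      (hf.mono (uIcc_subset_uIcc_right hmem)).intervalIntegrable, ← hc, ← hμ]
  simp only [iteratedDeriv_zero] at hleft hright
  linear_combination -hleft - hright - hmid

open Nat in
theorem integral_G {a b θ : ℝ} {m : ℕ} (hab : a ≤ b) (hm : 1 ≤ m) :
    ∫ x in a..b, G a b θ (2 * m) x
      = (b - a) ^ (2 * m + 1) / ((2 * m)! * 2 ^ (2 * m)) * (1 / (2 * m + 1) - θ) := by
  have hsplit := integral_G_mul (θ := θ) hab (by omega : 1 ≤ 2 * m)
    (intervalIntegrable_const (c := (1 : ℝ)))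
  simp only [mul_one] at hsplit
  rw [hsplit, integral_eq_sub_of_hasDerivAt (fun x _ => hasDerivAt_peanoPoly _ x)
      ((continuous_peanoPoly _).intervalIntegrable _ _),
    integral_eq_sub_of_hasDerivAt (fun x _ => hasDerivAt_peanoPoly _ x)
      ((continuous_peanoPoly _).intervalIntegrable _ _),
    peanoPoly_self (by omega), peanoPoly_self (by omega),
    peanoPoly_neg_of_sub_eq_neg _ (show (a + b) / 2 - b = -((a + b) / 2 - a) by ring),
    Odd.neg_one_pow ⟨m, rfl⟩]
  have hmid := two_mul_peanoPoly_midpoint (a := a) (b := b) (θ := θ) (Nat.le_add_left 1 (2 * m))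
  rw [Nat.add_sub_cancel, factorial_succ] at hmid
  push_cast at hmid
  have : (2 * m + 1 : ℝ) ≠ 0 := by positivity
  field_simp at hmid ⊢
  linear_combination hmid

open Nat in
theorem exists_G_eq_peanoProfile {a b θ x : ℝ} {m : ℕ} (hab : a < b) (hm : 1 ≤ m)
    (hx : x ∈ Icc a b) :
    ∃ s ∈ Icc (0 : ℝ) 1,
      G a b θ (2 * m) x = ((b - a) / 2) ^ (2 * m) * peanoProfile θ (2 * m) s / (2 * m)! := by
  have hh : 0 < (b - a) / 2 := by linarith
  rcases le_or_gt x ((a + b) / 2) with hxc | hxc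
  · refine ⟨(x - a) / ((b - a) / 2), ⟨div_nonneg (by linarith [hx.1]) hh.le,
      (div_le_one hh).2 (by linarith)⟩, ?_⟩
    rw [G_eq_peanoPoly_left (by omega) hxc, ← peanoPoly_add_mul a θ, mul_div_cancel₀ _ hh.ne',
      add_sub_cancel, mul_div_assoc]
  · refine ⟨(b - x) / ((b - a) / 2), ⟨div_nonneg (by linarith [hx.2]) hh.le,
      (div_le_one hh).2 (by linarith)⟩, ?_⟩
    rw [G_eq_peanoPoly_right (by omega) hxc, ← (even_two_mul m).neg_pow,
      ← peanoPoly_add_mul b θ, neg_mul, mul_div_cancel₀ _ hh.ne']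
    congr 1 <;> ring

open Nat in
theorem abs_G_sub_le {a b θ K x : ℝ} {m : ℕ} (hab : a < b) (hm : 1 ≤ m)
    (hK : ∀ s ∈ Icc (0 : ℝ) 1, |peanoProfile θ (2 * m) s - (1 / (2 * m + 1) - θ)| ≤ K)
    (hx : x ∈ Icc a b) :
    |G a b θ (2 * m) x - ((b - a) / 2) ^ (2 * m) / (2 * m)! * (1 / (2 * m + 1) - θ)|
      ≤ ((b - a) / 2) ^ (2 * m) / (2 * m)! * K := by
  obtain ⟨s, hs, hGs⟩ := exists_G_eq_peanoProfile (θ := θ) hab hm hx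
  have hscale : 0 ≤ ((b - a) / 2) ^ (2 * m) / (2 * m)! := by
    have : 0 ≤ (b - a) / 2 := by linarith
    positivity
  rw [hGs, mul_div_right_comm, ← mul_sub, abs_mul, abs_of_nonneg hscale]
  exact mul_le_mul_of_nonneg_left (by exact_mod_cast hK s hs) hscale

open Nat in
theorem abs_integral_sub_quadF_sub_le {a b θ γ K : ℝ} {m : ℕ} {f : ℝ → ℝ} (hab : a < b)
    (hm : 1 ≤ m)
    (hd : ∀ k < 2 * m - 1, ∀ x ∈ Icc a b,
      HasDerivAt (iteratedDeriv k f) (iteratedDeriv (k + 1) f x) x)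
    (hint : IntervalIntegrable (iteratedDeriv (2 * m) f) volume a b)
    (hftc : ∀ x ∈ Icc a b,
      iteratedDeriv (2 * m - 1) f x
        = iteratedDeriv (2 * m - 1) f a + ∫ t in a..x, iteratedDeriv (2 * m) f t)
    (hγ : ∀ x ∈ Icc a b, γ ≤ iteratedDeriv (2 * m) f x)
    (hK : ∀ s ∈ Icc (0 : ℝ) 1, |peanoProfile θ (2 * m) s - (1 / (2 * m + 1) - θ)| ≤ K) :
    |(∫ x in a..b, f x) - quadF a b θ (2 * m) f
        - (b - a) ^ (2 * m + 1) / ((2 * m)! * 2 ^ (2 * m)) * (1 / (2 * m + 1) - θ)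
          * ((iteratedDeriv (2 * m - 1) f b - iteratedDeriv (2 * m - 1) f a) / (b - a))|
      ≤ ((iteratedDeriv (2 * m - 1) f b - iteratedDeriv (2 * m - 1) f a) / (b - a) - γ)
        * ((b - a) ^ (2 * m + 1) / ((2 * m)! * 2 ^ (2 * m))) * K := by
  have hG : IntervalIntegrable (G a b θ (2 * m)) volume a b := by
    simpa using intervalIntegrable_G_mul (θ := θ) hab.le (by omega : 1 ≤ 2 * m)
      (intervalIntegrable_const (c := (1 : ℝ)))
  have hne : b - a ≠ 0 := by linarith
  have hbound := abs_integral_mul_sub_le hab.le hG hint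
    (intervalIntegrable_G_mul hab.le (by omega) hint) (by
      rw [integral_G hab.le hm, div_pow, pow_succ]
      field_simp)
    (fun x hx => abs_G_sub_le hab hm hK hx) hγ
  rw [integral_G_mul_iteratedDeriv hab.le hm hd hint hftc,
    ← sub_eq_of_eq_add' (hftc b (right_mem_Icc.2 hab.le))] at hbound
  refine (congrArg abs ?_).trans_le (hbound.trans_eq ?_) <;> rw [div_pow, pow_succ] <;> field_simp

theorem stmt12_general (a b θ : ℝ) (m : ℕ) (f : ℝ → ℝ) (γ : ℝ)
    (hab : a < b) (hθ : θ ∈ Set.Icc (0 : ℝ) 1) (hm : 1 ≤ m)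
    (hd : ∀ k < 2 * m - 1, ∀ x ∈ Set.Icc a b,
      HasDerivAt (iteratedDeriv k f) (iteratedDeriv (k + 1) f x) x)
    (hint : IntervalIntegrable (iteratedDeriv (2 * m) f) volume a b)
    (hftc : ∀ x ∈ Set.Icc a b,
      iteratedDeriv (2 * m - 1) f x
        = iteratedDeriv (2 * m - 1) f a + ∫ t in a..x, iteratedDeriv (2 * m) f t)
    (hγ : ∀ x ∈ Set.Icc a b, γ ≤ iteratedDeriv (2 * m) f x) :
    (1 ≤ θ * (2 * (m : ℝ) - 1) →
      |(∫ x in a..b, f x) - quadF a b θ (2 * m) f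
          - (b - a) ^ (2 * m + 1) / (((2 * m).factorial : ℝ) * 2 ^ (2 * m))
            * (1 / (2 * (m : ℝ) + 1) - θ)
            * ((iteratedDeriv (2 * m - 1) f b - iteratedDeriv (2 * m - 1) f a) / (b - a))|
        ≤ ((iteratedDeriv (2 * m - 1) f b - iteratedDeriv (2 * m - 1) f a) / (b - a) - γ)
          * ((b - a) ^ (2 * m + 1) / (((2 * m).factorial : ℝ) * 2 ^ (2 * m)))
          * (max (θ - 1 / (2 * (m : ℝ) + 1)) (θ * (2 * (m : ℝ) - 1) - 2 * (m : ℝ) / (2 * (m : ℝ) + 1)))) ∧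
    (θ * (2 * (m : ℝ) - 1) < 1 →
      |(∫ x in a..b, f x) - quadF a b θ (2 * m) f
          - (b - a) ^ (2 * m + 1) / (((2 * m).factorial : ℝ) * 2 ^ (2 * m))
            * (1 / (2 * (m : ℝ) + 1) - θ)
            * ((iteratedDeriv (2 * m - 1) f b - iteratedDeriv (2 * m - 1) f a) / (b - a))|
        ≤ ((iteratedDeriv (2 * m - 1) f b - iteratedDeriv (2 * m - 1) f a) / (b - a) - γ)
          * ((b - a) ^ (2 * m + 1) / (((2 * m).factorial : ℝ) * 2 ^ (2 * m)))
          * (max (max |θ - 1 / (2 * (m : ℝ) + 1)|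
                |θ * (2 * (m : ℝ) - 1) - 2 * (m : ℝ) / (2 * (m : ℝ) + 1)|)
            |θ - 1 / (2 * (m : ℝ) + 1) - θ ^ (2 * m) * (2 * (m : ℝ) - 1) ^ (2 * m - 1)|)) := by
  have hn : 2 ≤ 2 * m := by omega
  have hcast : ((2 * m : ℕ) : ℝ) = 2 * m := by push_cast; ring
  refine ⟨fun hθm => abs_integral_sub_quadF_sub_le hab hm hd hint hftc hγ fun s hs => ?_,
    fun _ => abs_integral_sub_quadF_sub_le hab hm hd hint hftc hγ fun s hs => ?_⟩
  · simpa only [hcast] using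
      abs_peanoProfile_sub_le_of_one_le hn hθ.1 (by rwa [hcast]) hs
  · simpa only [hcast] using abs_peanoProfile_sub_le (θ := θ) hn hθ.1 hs

theorem stmt12 (a b θ : ℝ) (m : ℕ) (f : ℝ → ℝ) (γ Γ : ℝ)
    (hab : a < b) (hθ : θ ∈ Set.Icc (0 : ℝ) 1) (hm : 1 ≤ m)
    (hd : ∀ k < 2 * m - 1, ∀ x ∈ Set.Icc a b,
      HasDerivAt (iteratedDeriv k f) (iteratedDeriv (k + 1) f x) x)
    (hcont : ContinuousOn (iteratedDeriv (2 * m - 1) f) (Set.Icc a b))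
    (hint : IntervalIntegrable (iteratedDeriv (2 * m) f) volume a b)
    (hftc : ∀ x ∈ Set.Icc a b,
      iteratedDeriv (2 * m - 1) f x
        = iteratedDeriv (2 * m - 1) f a + ∫ t in a..x, iteratedDeriv (2 * m) f t)
    (hγ : ∀ x ∈ Set.Icc a b, γ ≤ iteratedDeriv (2 * m) f x)
    (hΓ : ∀ x ∈ Set.Icc a b, iteratedDeriv (2 * m) f x ≤ Γ) :
    (1 ≤ θ * (2 * (m : ℝ) - 1) →
      |(∫ x in a..b, f x) - quadF a b θ (2 * m) f
          - (b - a) ^ (2 * m + 1) / (((2 * m).factorial : ℝ) * 2 ^ (2 * m))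
            * (1 / (2 * (m : ℝ) + 1) - θ)
            * ((iteratedDeriv (2 * m - 1) f b - iteratedDeriv (2 * m - 1) f a) / (b - a))|
        ≤ ((iteratedDeriv (2 * m - 1) f b - iteratedDeriv (2 * m - 1) f a) / (b - a) - γ)
          * ((b - a) ^ (2 * m + 1) / (((2 * m).factorial : ℝ) * 2 ^ (2 * m)))
          * (max (θ - 1 / (2 * (m : ℝ) + 1)) (θ * (2 * (m : ℝ) - 1) - 2 * (m : ℝ) / (2 * (m : ℝ) + 1)))) ∧
    (θ * (2 * (m : ℝ) - 1) < 1 →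
      |(∫ x in a..b, f x) - quadF a b θ (2 * m) f
          - (b - a) ^ (2 * m + 1) / (((2 * m).factorial : ℝ) * 2 ^ (2 * m))
            * (1 / (2 * (m : ℝ) + 1) - θ)
            * ((iteratedDeriv (2 * m - 1) f b - iteratedDeriv (2 * m - 1) f a) / (b - a))|
        ≤ ((iteratedDeriv (2 * m - 1) f b - iteratedDeriv (2 * m - 1) f a) / (b - a) - γ)
          * ((b - a) ^ (2 * m + 1) / (((2 * m).factorial : ℝ) * 2 ^ (2 * m)))
          * (max (max |θ - 1 / (2 * (m : ℝ) + 1)|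
                |θ * (2 * (m : ℝ) - 1) - 2 * (m : ℝ) / (2 * (m : ℝ) + 1)|)
            |θ - 1 / (2 * (m : ℝ) + 1) - θ ^ (2 * m) * (2 * (m : ℝ) - 1) ^ (2 * m - 1)|)) :=
  stmt12_general a b θ m f γ hab hθ hm hd hint hftc hγ
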